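/- arXiv:0909.1482 — 4 statements merged into one kernel-verified Lean document; each statement's English description precedes it below -/
import Mathlib

section
/- Let A be an integral domain and let D = diag(d_1,...,d_r,0,...,0) and D' = diag(d'_1,...,d'_s,0,...,0) be diagonal n×n matrices over A with d_k | d_{k+1} for k = 1,...,r-1 and d'_k | d'_{k+1} for k = 1,...,s-1. If D = P·D'·Q for invertible matrices P, Q over A, then r = s and (d_k) = (d'_k) as ideals for all k. -/
/-!
The ideal generated by the `k × k` minors of a matrix can only shrink under multiplication by
another matrix (expand a minor of a product row-multilinearly), so it is invariant under
`M ↦ P * M * Q` with `P`, `Q` invertible. For a diagonal matrix whose entries form a divisibility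
chain `d₀ ∣ d₁ ∣ ⋯` it is generated by `d₀ ⋯ d_{k-1}`: a product of `k` distinct entries, once
sorted, has its `j`-th factor divisible by `d_j`. Hence the partial products of `d` and `e` are
associated for every `k ≤ n`; the first `k` at which they vanish gives `r = s`, and cancelling
consecutive partial products in the domain gives `(d i) = (e i)`.
-/

open Finset

theorem Fin.val_le_of_strictMono {k n : ℕ} {f : Fin k → Fin n} (hf : StrictMono f) (j : Fin k) :
    (j : ℕ) ≤ f j := by
  simpa using card_le_card_of_injOn f (s := Iio j) (t := Iio (f j))
    (fun i hi => by simpa using hf (by simpa using hi)) hf.injective.injOn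

theorem prod_range_dvd_prod_of_injective {α : Type*} [CommMonoid α] {d : ℕ → α}
    (hd : ∀ i j, i ≤ j → d i ∣ d j) {k n : ℕ} {σ : Fin k → Fin n}
    (hσ : Function.Injective σ) :
    ∏ j ∈ range k, d j ∣ ∏ i, d (σ i) := by
  set π := Tuple.sort σ
  have hsorted : StrictMono (σ ∘ π) :=
    (Tuple.monotone_sort σ).strictMono_of_injective (hσ.comp π.injective)
  calc ∏ j ∈ range k, d j = ∏ j : Fin k, d j := (Fin.prod_univ_eq_prod_range d k).symm
    _ ∣ ∏ j, d (σ (π j)) :=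
      prod_dvd_prod_of_dvd _ _ fun j _ => hd _ _ (Fin.val_le_of_strictMono hsorted j)
    _ = ∏ i, d (σ i) := Equiv.prod_comp π fun i => d (σ i)

namespace Matrix

variable {R : Type*} [CommRing R] {l m n ι : Type*}

theorem det_mul_eq_sum_prod_mul_det_submatrix [Fintype ι] [DecidableEq ι] [Fintype m]
    (M : Matrix ι m R) (N : Matrix m ι R) :
    (M * N).det = ∑ f : ι → m, (∏ i, M i (f i)) * (N.submatrix f id).det := by
  have hrows : M * N = of fun i => ∑ j, M i j • N j := by
    ext i k; simp [mul_apply]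
  rw [hrows]
  have hsum := detRowAlternating.toMultilinearMap.map_sum fun i j => M i j • N j
  rw [AlternatingMap.coe_multilinearMap] at hsum
  refine hsum.trans (sum_congr rfl fun f _ => ?_)
  have hsmul := detRowAlternating.toMultilinearMap.map_smul_univ (fun i => M i (f i))
    (fun i => N (f i))
  rw [AlternatingMap.coe_multilinearMap] at hsmul
  rw [hsmul, smul_eq_mul]
  rfl

def minorsIdeal (k : ℕ) (M : Matrix m n R) : Ideal R :=
  Ideal.span (Set.range fun p : (Fin k → m) × (Fin k → n) => (M.submatrix p.1 p.2).det)

theorem det_submatrix_mem_minorsIdeal {k : ℕ} (M : Matrix m n R) (ρ : Fin k → m)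
    (σ : Fin k → n) :
    (M.submatrix ρ σ).det ∈ minorsIdeal k M :=
  Ideal.subset_span ⟨(ρ, σ), rfl⟩

theorem minorsIdeal_le_iff {k : ℕ} {M : Matrix m n R} {I : Ideal R} :
    minorsIdeal k M ≤ I ↔
      ∀ (ρ : Fin k → m) (σ : Fin k → n), (M.submatrix ρ σ).det ∈ I := by
  simp [minorsIdeal, Ideal.span_le, Set.range_subset_iff]

theorem minorsIdeal_mul_le_right [Fintype m] (k : ℕ) (M : Matrix l m R) (N : Matrix m n R) :
    minorsIdeal k (M * N) ≤ minorsIdeal k N := by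
  refine minorsIdeal_le_iff.2 fun ρ σ => ?_
  rw [submatrix_mul M N ρ id σ Function.bijective_id, det_mul_eq_sum_prod_mul_det_submatrix]
  exact Ideal.sum_mem _ fun f _ => Ideal.mul_mem_left _ _ (det_submatrix_mem_minorsIdeal N f σ)

theorem minorsIdeal_transpose_le (k : ℕ) (M : Matrix m n R) :
    minorsIdeal k Mᵀ ≤ minorsIdeal k M :=
  minorsIdeal_le_iff.2 fun ρ σ => by
    rw [← transpose_submatrix, det_transpose]
    exact det_submatrix_mem_minorsIdeal M σ ρ

theorem minorsIdeal_transpose (k : ℕ) (M : Matrix m n R) : minorsIdeal k Mᵀ = minorsIdeal k M :=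
  le_antisymm (minorsIdeal_transpose_le k M) (by simpa using minorsIdeal_transpose_le k Mᵀ)

theorem minorsIdeal_mul_le_left [Fintype m] (k : ℕ) (M : Matrix l m R) (N : Matrix m n R) :
    minorsIdeal k (M * N) ≤ minorsIdeal k M := by
  rw [← minorsIdeal_transpose k (M * N), ← minorsIdeal_transpose k M, transpose_mul]
  exact minorsIdeal_mul_le_right k Nᵀ Mᵀ

theorem minorsIdeal_mul_mul_of_isUnit_det [Fintype m] [DecidableEq m] [Fintype n] [DecidableEq n]
    (k : ℕ) {P : Matrix m m R} {Q : Matrix n n R} (hP : IsUnit P.det) (hQ : IsUnit Q.det)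
    (M : Matrix m n R) : minorsIdeal k (P * M * Q) = minorsIdeal k M := by
  refine le_antisymm ((minorsIdeal_mul_le_left k _ Q).trans (minorsIdeal_mul_le_right k P M)) ?_
  have hM : M = P⁻¹ * (P * M * Q) * Q⁻¹ := by
    rw [Matrix.mul_assoc P, nonsing_inv_mul_cancel_left _ _ hP, mul_nonsing_inv_cancel_right _ _ hQ]
  conv_lhs => rw [hM]
  exact (minorsIdeal_mul_le_left k _ Q⁻¹).trans (minorsIdeal_mul_le_right k P⁻¹ _)

theorem minorsIdeal_diagonal_of_dvd {n k : ℕ} (hk : k ≤ n) {d : ℕ → R}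
    (hd : ∀ i j, i ≤ j → d i ∣ d j) :
    minorsIdeal k (diagonal fun i : Fin n => d i) = Ideal.span {∏ j ∈ range k, d j} := by
  refine le_antisymm (minorsIdeal_le_iff.2 fun ρ σ => ?_) ?_
  · by_cases hσ : Function.Injective σ
    · have hfactor : (diagonal fun i : Fin n => d i).submatrix ρ σ =
          (1 : Matrix (Fin n) (Fin n) R).submatrix ρ σ * diagonal fun i => d (σ i) := by
        ext i j
        by_cases h : ρ i = σ j <;> simp [one_apply, h]
      rw [hfactor, det_mul, det_diagonal, Ideal.mem_span_singleton]
      exact (prod_range_dvd_prod_of_injective hd hσ).mul_left _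
    · obtain ⟨i, j, hij, hne⟩ := Function.not_injective_iff.1 hσ
      rw [det_zero_of_column_eq hne fun l => by simp [hij]]
      exact Ideal.zero_mem _
  · rw [Ideal.span_le, Set.singleton_subset_iff, ← Fin.prod_univ_eq_prod_range]
    have := det_submatrix_mem_minorsIdeal (diagonal fun i : Fin n => d i)
      (Fin.castLE hk) (Fin.castLE hk)
    rwa [submatrix_diagonal _ _ (Fin.castLE_injective hk), det_diagonal] at this

end Matrix

section Truncation

variable {α : Type*} {d : ℕ → α} {r : ℕ}

theorem ite_lt_dvd_ite_lt_of_dvd_succ [CommMonoidWithZero α]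
    (hd : ∀ i, i + 1 < r → d i ∣ d (i + 1))
    {i j : ℕ} (hij : i ≤ j) : (if i < r then d i else 0) ∣ (if j < r then d j else 0) := by
  refine Nat.rel_of_forall_rel_succ_of_le (fun a b : α => a ∣ b)
    (f := fun i => if i < r then d i else 0) (fun i => ?_) hij
  by_cases hi : i + 1 < r
  · simpa [hi, (Nat.lt_succ_self i).trans hi] using hd i hi
  · simp [hi]

theorem prod_range_ite_lt_of_le [CommMonoid α] [Zero α] {k : ℕ} (hk : k ≤ r) :
    ∏ j ∈ range k, (if j < r then d j else 0) = ∏ j ∈ range k, d j :=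
  prod_congr rfl fun _ hj => if_pos ((mem_range.1 hj).trans_le hk)

theorem prod_range_ite_lt_eq_zero_iff [CommMonoidWithZero α] [NoZeroDivisors α] [Nontrivial α]
    (hd0 : ∀ i < r, d i ≠ 0) {k : ℕ} :
    ∏ j ∈ range k, (if j < r then d j else 0) = 0 ↔ r < k := by
  rw [prod_eq_zero_iff]
  constructor
  · rintro ⟨j, hj, hzero⟩
    by_cases hjr : j < r
    · exact absurd (by simpa [hjr] using hzero) (hd0 j hjr)
    · exact (not_lt.1 hjr).trans_lt (mem_range.1 hj)
  · exact fun hrk => ⟨r, mem_range.2 hrk, if_neg (lt_irrefl r)⟩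

end Truncation

theorem eq_and_associated_of_associated_prod_range {R : Type*} [CommRing R] [IsDomain R]
    {n r s : ℕ} (hr : r ≤ n) (hs : s ≤ n) {d e : ℕ → R}
    (hd0 : ∀ i < r, d i ≠ 0) (he0 : ∀ i < s, e i ≠ 0)
    (h : ∀ k ≤ n, Associated (∏ j ∈ range k, if j < r then d j else 0)
      (∏ j ∈ range k, if j < s then e j else 0)) :
    r = s ∧ ∀ i < r, Associated (d i) (e i) := by
  have hzero : ∀ k ≤ n, (r < k ↔ s < k) := fun k hk => by
    rw [← prod_range_ite_lt_eq_zero_iff hd0, ← prod_range_ite_lt_eq_zero_iff he0]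
    exact (h k hk).eq_zero_iff
  obtain rfl : r = s := le_antisymm
    (not_lt.1 fun hsr => lt_irrefl r ((hzero r hr).2 hsr))
    (not_lt.1 fun hrs => lt_irrefl s ((hzero s hs).1 hrs))
  refine ⟨rfl, fun i hi => ?_⟩
  have hprefix := h i (hi.le.trans hr)
  have hsucc := h (i + 1) (hi.trans_le hr)
  rw [prod_range_ite_lt_of_le hi.le, prod_range_ite_lt_of_le hi.le] at hprefix
  rw [prod_range_ite_lt_of_le hi, prod_range_ite_lt_of_le hi, prod_range_succ,
    prod_range_succ] at hsucc
  refine hsucc.of_mul_left hprefix ?_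
  rw [← prod_range_ite_lt_of_le hi.le, Ne, prod_range_ite_lt_eq_zero_iff hd0]
  exact not_lt.2 hi.le

/-- Uniqueness of the Smith normal form over a domain: if two diagonal matrices
`diag(d_1,…,d_r,0,…,0)` and `diag(d'_1,…,d'_s,0,…,0)` with divisibility chains are
equivalent (via matrices with unit determinant), then `r = s` and corresponding
diagonal coefficients generate the same principal ideals. -/
theorem smith_normal_form_unique {A : Type*} [CommRing A] [IsDomain A] {n : ℕ}
    (r s : ℕ) (hr : r ≤ n) (hs : s ≤ n) (d e : ℕ → A)
    (hd0 : ∀ i < r, d i ≠ 0) (he0 : ∀ i < s, e i ≠ 0)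
    (hddvd : ∀ i, i + 1 < r → d i ∣ d (i + 1))
    (hedvd : ∀ i, i + 1 < s → e i ∣ e (i + 1))
    (P Q : Matrix (Fin n) (Fin n) A) (hP : IsUnit P.det) (hQ : IsUnit Q.det)
    (hPQ : Matrix.diagonal (fun i : Fin n => if (i : ℕ) < r then d i else 0) =
      P * Matrix.diagonal (fun i : Fin n => if (i : ℕ) < s then e i else 0) * Q) :
    r = s ∧ ∀ i < r, Ideal.span {d i} = Ideal.span {e i} := by
  have hassoc : ∀ k ≤ n, Associated (∏ j ∈ range k, if j < r then d j else 0)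
      (∏ j ∈ range k, if j < s then e j else 0) := fun k hk => by
    rw [← Ideal.span_singleton_eq_span_singleton,
      ← Matrix.minorsIdeal_diagonal_of_dvd hk fun _ _ => ite_lt_dvd_ite_lt_of_dvd_succ hddvd,
      ← Matrix.minorsIdeal_diagonal_of_dvd hk fun _ _ => ite_lt_dvd_ite_lt_of_dvd_succ hedvd,
      hPQ, Matrix.minorsIdeal_mul_mul_of_isUnit_det k hP hQ]
  obtain ⟨rfl, h⟩ := eq_and_associated_of_associated_prod_range hr hs hd0 he0 hassoc
  exact ⟨rfl, fun i hi => Ideal.span_singleton_eq_span_singleton.2 (h i hi)⟩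
end

section
/- Let k be a formally real field and let p(x) be a monic irreducible polynomial in k[x] such that the ideal (p) is not real (i.e., k[x]/(p) is not formally real, meaning -1 is a sum of squares in k[x]/(p)). Then for every ring homomorphism φ from k[x] to a real closed field R, and every evaluation, φ(p) takes only strictly positive values; equivalently, p is strictly positive at every point of the real spectrum of k[x]. -/
/-!
If `p ∣ 1 + s` with `s` a sum of squares, reducing the squared polynomials modulo `p` gives
`p * q = 1 + t` with `t` a sum of squares of degree `≤ 2 deg p - 2`, so `deg q < deg p`.
Both `φ (1 + t)` and the image of its leading coefficient are positive: the latter is the leading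
coefficient of a nonzero sum of squares in `R[X]`. By induction on the degree, `φ q` has the sign
of the image of the leading coefficient of `q`, hence so does `φ p`; for monic `p` it is positive.
-/

open Polynomial

/-- A linearly ordered field is real closed if every nonnegative element is a square
and every polynomial of odd degree has a root. -/
def IsRealClosedField (R : Type*) [Field R] [LinearOrder R] [IsStrictOrderedRing R] : Prop :=
  (∀ x : R, 0 ≤ x → ∃ y : R, y ^ 2 = x) ∧
    ∀ f : Polynomial R, Odd f.natDegree → ∃ x : R, f.eval x = 0

theorem IsSumSq.map {R S : Type*} [Semiring R] [Semiring S] (f : R →+* S) {s : R}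
    (hs : IsSumSq s) : IsSumSq (f s) := by
  induction hs with
  | zero => exact map_zero f ▸ .zero
  | sq_add a _ ih => simpa using ih.sq_add (f a)

theorem IsSumSq.exists_preimage_of_surjective {R S : Type*} [Semiring R] [Semiring S]
    {f : R →+* S} (hf : Function.Surjective f) {y : S} (hy : IsSumSq y) :
    ∃ x, IsSumSq x ∧ f x = y := by
  induction hy with
  | zero => exact ⟨0, .zero, map_zero f⟩
  | sq_add b _ ih =>
    obtain ⟨x, hx, rfl⟩ := ih
    obtain ⟨a, rfl⟩ := hf b
    exact ⟨a * a + x, hx.sq_add a, by simp⟩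

namespace Polynomial

section Ordered

variable {R : Type*} [CommRing R] [LinearOrder R] [IsStrictOrderedRing R]

theorem leadingCoeff_add_pos {f g : R[X]} (hf : 0 < f.leadingCoeff) (hg : 0 < g.leadingCoeff) :
    0 < (f + g).leadingCoeff := by
  rcases lt_trichotomy f.degree g.degree with h | h | h
  · rwa [leadingCoeff_add_of_degree_lt h]
  · rw [leadingCoeff_add_of_degree_eq h (add_pos hf hg).ne']
    exact add_pos hf hg
  · rwa [leadingCoeff_add_of_degree_lt' h]

theorem leadingCoeff_pos_of_isSumSq {f : R[X]} (hf : IsSumSq f) (hf0 : f ≠ 0) :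
    0 < f.leadingCoeff := by
  induction hf with
  | zero => exact absurd rfl hf0
  | @sq_add a s _ ih =>
    obtain rfl | ha := eq_or_ne a 0
    · simpa using ih (by simpa using hf0)
    have ha2 : 0 < (a * a).leadingCoeff := by
      rw [leadingCoeff_mul]
      exact mul_self_pos.mpr (leadingCoeff_ne_zero.mpr ha)
    obtain rfl | hs0 := eq_or_ne s 0
    · simpa using ha2
    exact leadingCoeff_add_pos ha2 (ih hs0)

end Ordered

section Field

variable {k : Type*} [Field k]

theorem exists_isSumSq_dvd_sub_natDegree_add_two_le {p s : k[X]} (hp : 0 < p.natDegree)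
    (hs : IsSumSq s) :
    ∃ t, IsSumSq t ∧ p ∣ s - t ∧ t.natDegree + 2 ≤ 2 * p.natDegree := by
  induction hs with
  | zero => exact ⟨0, .zero, by simp, by simp only [natDegree_zero]; omega⟩
  | @sq_add a s _ ih =>
    obtain ⟨t, ht, hst, htdeg⟩ := ih
    have hmod : p ∣ a * a - a % p * (a % p) := by
      have hsub : p ∣ a - a % p :=
        ⟨a / p, by linear_combination (EuclideanDomain.div_add_mod a p).symm⟩
      rw [mul_self_sub_mul_self]
      exact hsub.mul_left _
    refine ⟨a % p * (a % p) + t, ht.sq_add _, ?_, ?_⟩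
    · convert dvd_add hmod hst using 1
      ring
    · have hr := natDegree_mod_lt a hp.ne'
      have hr2 := natDegree_mul_le (p := a % p) (q := a % p)
      have hsum := natDegree_add_le (a % p * (a % p)) t
      omega

variable {R : Type*} [CommRing R] [LinearOrder R] [IsStrictOrderedRing R]

theorem map_one_add_pos_of_isSumSq {A : Type*} [Semiring A] (φ : A →+* R) {s : A}
    (hs : IsSumSq s) : 0 < φ (1 + s) := by
  rw [map_add, map_one]
  exact add_pos_of_pos_of_nonneg one_pos (hs.map φ).nonneg

theorem map_C_leadingCoeff_one_add_pos (φ : k[X] →+* R) {s : k[X]} (hs : IsSumSq s) :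
    0 < φ (C (1 + s).leadingCoeff) := by
  have hne : 1 + s ≠ 0 := fun h => by simpa [h] using map_one_add_pos_of_isSumSq φ hs
  rw [← RingHom.comp_apply, ← leadingCoeff_map]
  exact leadingCoeff_pos_of_isSumSq ((IsSumSq.one.add hs).map (mapRingHom _)) (map_ne_zero hne)

theorem map_C_leadingCoeff_mul_pos_of_dvd_one_add (φ : k[X] →+* R) {p s : k[X]}
    (hs : IsSumSq s) (hdvd : p ∣ 1 + s) : 0 < φ (C p.leadingCoeff) * φ p := by
  induction hn : p.natDegree using Nat.strong_induction_on generalizing p s with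
  | _ n ih =>
  have hp0 : p ≠ 0 := by
    rintro rfl
    simpa [zero_dvd_iff.mp hdvd] using map_one_add_pos_of_isSumSq φ hs
  obtain rfl | hn0 := eq_or_ne n 0
  · obtain ⟨c, rfl⟩ := natDegree_eq_zero.mp hn
    have hc : φ (C c) ≠ 0 := by simpa using (φ.comp C).injective.ne (C_ne_zero.mp hp0)
    simpa using mul_self_pos.mpr hc
  obtain ⟨t, ht, hst, htdeg⟩ :=
    exists_isSumSq_dvd_sub_natDegree_add_two_le (hn ▸ Nat.pos_of_ne_zero hn0) hs
  obtain ⟨q, hq⟩ : p ∣ 1 + t := by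
    convert dvd_sub hdvd hst using 1
    ring
  have hq0 : q ≠ 0 := by
    rintro rfl
    simpa [hq] using map_one_add_pos_of_isSumSq φ ht
  have hqdeg : q.natDegree < n := by
    have hdeg : n + q.natDegree = (1 + t).natDegree := by rw [hq, natDegree_mul hp0 hq0, hn]
    have hle := natDegree_add_le 1 t
    rw [natDegree_one] at hle
    omega
  have hq_pos := ih _ hqdeg ht ⟨p, by rw [hq, mul_comm]⟩ rfl
  have hg_pos := mul_pos (map_C_leadingCoeff_one_add_pos φ ht) (map_one_add_pos_of_isSumSq φ ht)
  rw [hq, leadingCoeff_mul, C_mul, map_mul, map_mul, mul_mul_mul_comm] at hg_pos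
  exact pos_of_mul_pos_left hg_pos hq_pos.le

end Field

end Polynomial

theorem nonreal_irreducible_pos_general {k : Type*} [Field k]
    (p : Polynomial k) (hmonic : p.Monic)
    (hnonreal : IsSumSq (-1 : Polynomial k ⧸ Ideal.span {p})) :
    ∀ (R : Type) [Field R] [LinearOrder R] [IsStrictOrderedRing R], IsRealClosedField R →
      ∀ φ : Polynomial k →+* R, 0 < φ p := by
  intro R _ _ _ _ φ
  obtain ⟨s, hs, hs1⟩ := hnonreal.exists_preimage_of_surjective Ideal.Quotient.mk_surjective
  have hdvd : p ∣ 1 + s := by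
    rw [← Ideal.mem_span_singleton, ← Ideal.Quotient.eq_zero_iff_mem, map_add, hs1]
    simp
  simpa [hmonic.leadingCoeff] using map_C_leadingCoeff_mul_pos_of_dvd_one_add φ hs hdvd

/-- Let `k` be a formally real field and `p` a monic irreducible polynomial in `k[x]`
generating a non-real ideal (i.e. `-1` is a sum of squares in `k[x]/(p)`). Then `p` is
strictly positive at every point of the real spectrum of `k[x]`: for every ring
homomorphism `φ` from `k[x]` into a real closed field `R`, `φ(p) > 0`. -/
theorem nonreal_irreducible_pos {k : Type*} [Field k]
    (hk : ¬ IsSumSq (-1 : k))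
    (p : Polynomial k) (hmonic : p.Monic) (hirr : Irreducible p)
    (hnonreal : IsSumSq (-1 : Polynomial k ⧸ Ideal.span {p})) :
    ∀ (R : Type) [Field R] [LinearOrder R] [IsStrictOrderedRing R], IsRealClosedField R →
      ∀ φ : Polynomial k →+* R, 0 < φ p :=
  nonreal_irreducible_pos_general p hmonic hnonreal
end

section
/- In the ring A = ℝ[x,y]/(y² − x(x²−1)), with q = x − 1/2, the identity q² = 1/4 + (x² − x) holds, and the element e = x² − x satisfies: for every ring homomorphism φ : A → ℝ, φ(e) ≥ 0. -/
open Polynomial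

theorem sub_half_sq_eq_quarter_add {k A : Type*} [Field k] [CommRing A] (h2 : (2 : k) ≠ 0)
    (f : k →+* A) (x : A) :
    (x - f (1 / 2)) ^ 2 = f (1 / 4) + (x ^ 2 - x) := by
  have htwo : 2 * f (1 / 2) = 1 := by
    rw [← map_ofNat f 2, ← map_mul, mul_one_div_cancel h2, map_one]
  have hsq : f (1 / 2) ^ 2 = f (1 / 4) := by
    rw [← map_pow]; norm_num
  linear_combination hsq - x * htwo

/-- On the real curve `b² = a³ - a` one has `a ∈ [-1, 0] ∪ [1, ∞)`, where `a(a - 1) ≥ 0`. -/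
theorem sq_sub_self_nonneg_of_sq_eq {R : Type*} [CommRing R] [LinearOrder R] [IsStrictOrderedRing R]
    {a b : R} (h : b ^ 2 = a * (a ^ 2 - 1)) : 0 ≤ a ^ 2 - a := by
  have hcubic : 0 ≤ a * (a - 1) * (a + 1) := by nlinarith [sq_nonneg b]
  nlinarith [sq_nonneg a, sq_nonneg (a - 1), sq_nonneg (a * (a - 1))]

/-- In `A = ℝ[x,y]/(y² - x(x²-1))`, with `q = x - 1/2`, the identity
`q² = 1/4 + (x² - x)` holds, and `e = x² - x` is nonnegative under every ring
homomorphism `A → ℝ`. -/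
theorem cubic_counterexample_data :
    let I : Ideal (Polynomial (Polynomial ℝ)) :=
      Ideal.span {(X : Polynomial (Polynomial ℝ)) ^ 2 -
        C ((X * (X ^ 2 - 1)) : Polynomial ℝ)}
    let xA := Ideal.Quotient.mk I (C (X : Polynomial ℝ))
    let q := xA - Ideal.Quotient.mk I (C (C (1/2 : ℝ)))
    q ^ 2 = Ideal.Quotient.mk I (C (C (1/4 : ℝ))) + (xA ^ 2 - xA) ∧
      ∀ φ : (Polynomial (Polynomial ℝ) ⧸ I) →+* ℝ, 0 ≤ φ (xA ^ 2 - xA) := by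
  intro I xA q
  refine ⟨?_, fun φ => ?_⟩
  · simpa only [RingHom.comp_apply] using
      sub_half_sq_eq_quarter_add two_ne_zero ((Ideal.Quotient.mk I).comp (C.comp C)) xA
  have hcurve : Ideal.Quotient.mk I (X ^ 2) = Ideal.Quotient.mk I (C (X * (X ^ 2 - 1))) :=
    Ideal.Quotient.eq.mpr (Ideal.mem_span_singleton_self _)
  have hpoint : φ (Ideal.Quotient.mk I X) ^ 2 = φ xA * (φ xA ^ 2 - 1) := by
    simpa [xA] using congrArg φ hcurve
  rw [map_sub, map_pow]
  exact sq_sub_self_nonneg_of_sq_eq hpoint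
end

section
/- Let A be a unique factorization domain, and suppose a, b ∈ A and p ∈ A is irreducible with (p) a real prime ideal such that there exists an ordering α of A with support (p) admitting a generization β with support (0). If a − b² is nonnegative with respect to every ordering of A (with every support), then ν_p(a) ≤ 2·ν_p(b), where ν_p denotes the p-adic valuation. -/
/-- A point of the real spectrum of `A`: a ring homomorphism from `A` into a real
closed field.  Its support is the kernel of the homomorphism. -/
structure RealSpectrumPoint (A : Type*) [CommRing A] where
  carrier : Type
  [field : Field carrier]
  [linearOrder : LinearOrder carrier]
  [isStrictOrderedRing : IsStrictOrderedRing carrier]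
  realClosed : IsRealClosedField carrier
  hom : A →+* carrier

attribute [instance] RealSpectrumPoint.field
attribute [instance] RealSpectrumPoint.linearOrder
attribute [instance] RealSpectrumPoint.isStrictOrderedRing

/-!
Write `b = p ^ t * c`. If `p ^ (2t+1)` divides `a`, then
`a - b² = (p ^ t)² (p d - c²)`. At the generization `β` the factor `p` is nonzero, so
`p d - c² ≥ 0` there, hence also at its specialization `α`; since `α` kills `p`, this says
`-α(c)² ≥ 0`, so `α(c) = 0` and `p ∣ c`. Thus `p ^ (2t+1) ∣ a` forces `p ^ (t+1) ∣ b`, and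
induction on `t` gives the bound on valuations.
-/

section Generization

variable {A K L : Type*} [CommRing A] [CommRing K] [LinearOrder K] [IsStrictOrderedRing K]
  [CommRing L] [LinearOrder L] {α : A →+* K} {β : A →+* L} {p : A}

theorem dvd_of_generization_nonneg (hα : RingHom.ker α = Ideal.span {p})
    (hβα : ∀ x : A, 0 ≤ β x → 0 ≤ α x) {c d : A} (h : 0 ≤ β (p * d - c ^ 2)) : p ∣ c := by
  have hαp : α p = 0 := by
    rw [← RingHom.mem_ker, hα]
    exact Ideal.mem_span_singleton_self p
  have hαc : α c ^ 2 ≤ 0 := by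
    have := hβα _ h
    rwa [map_sub, map_mul, hαp, zero_mul, map_pow, zero_sub, neg_nonneg] at this
  rw [← Ideal.mem_span_singleton, ← hα, RingHom.mem_ker]
  exact (sq_nonpos_iff _).mp hαc

theorem pow_succ_dvd_of_generization [IsStrictOrderedRing L]
    (hα : RingHom.ker α = Ideal.span {p}) (hβp : β p ≠ 0)
    (hβα : ∀ x : A, 0 ≤ β x → 0 ≤ α x) {a b : A} (hab : 0 ≤ β (a - b ^ 2)) {t : ℕ}
    (ha : p ^ (2 * t + 1) ∣ a) (hb : p ^ t ∣ b) : p ^ (t + 1) ∣ b := by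
  obtain ⟨d, rfl⟩ := ha
  obtain ⟨c, rfl⟩ := hb
  have hfactor : p ^ (2 * t + 1) * d - (p ^ t * c) ^ 2 = (p ^ t) ^ 2 * (p * d - c ^ 2) := by
    ring
  rw [hfactor, map_mul] at hab
  have hsq : 0 < β ((p ^ t) ^ 2) := by
    rw [map_pow, map_pow]
    exact pow_two_pos_of_ne_zero (pow_ne_zero t hβp)
  rw [pow_succ]
  exact mul_dvd_mul_left _
    (dvd_of_generization_nonneg hα hβα (nonneg_of_mul_nonneg_right hab hsq))

end Generization

theorem pow_dvd_of_pow_two_mul_dvd {M : Type*} [Monoid M] {a b p : M}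
    (step : ∀ t : ℕ, p ^ (2 * t + 1) ∣ a → p ^ t ∣ b → p ^ (t + 1) ∣ b) :
    ∀ t : ℕ, p ^ (2 * t) ∣ a → p ^ t ∣ b
  | 0, _ => by simp
  | t + 1, ha => by
    have ha' : p ^ (2 * t + 1) ∣ a := (pow_dvd_pow p (by omega)).trans ha
    exact step t ha' (pow_dvd_of_pow_two_mul_dvd step t ((pow_dvd_pow p (by omega)).trans ha'))

theorem pow_dvd_sq_of_forall_pow_succ_dvd {M : Type*} [CommMonoid M] {a b p : M}
    (step : ∀ t : ℕ, p ^ (2 * t + 1) ∣ a → p ^ t ∣ b → p ^ (t + 1) ∣ b)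
    (k : ℕ) (hk : p ^ k ∣ a) : p ^ k ∣ b ^ 2 := by
  obtain ⟨t, rfl | rfl⟩ := Nat.even_or_odd' k
  · rw [pow_mul']
    exact pow_dvd_pow_of_dvd (pow_dvd_of_pow_two_mul_dvd step t hk) 2
  · have hb : p ^ (t + 1) ∣ b :=
      step t hk (pow_dvd_of_pow_two_mul_dvd step t ((pow_dvd_pow p (by omega)).trans hk))
    calc p ^ (2 * t + 1) ∣ p ^ ((t + 1) * 2) := pow_dvd_pow p (by omega)
      _ = (p ^ (t + 1)) ^ 2 := pow_mul p (t + 1) 2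
      _ ∣ b ^ 2 := pow_dvd_pow_of_dvd hb 2

theorem valuation_of_psd_general {A : Type*} [CommRing A]
    (a b p : A)
    (hp : Irreducible p)
    (hgen : ∃ (α β : RealSpectrumPoint A),
        RingHom.ker α.hom = Ideal.span {p} ∧ RingHom.ker β.hom = ⊥ ∧
        ∀ x : A, 0 ≤ β.hom x → 0 ≤ α.hom x)
    (hpsd : ∀ γ : RealSpectrumPoint A, 0 ≤ γ.hom (a - b ^ 2)) :
    ∀ k : ℕ, p ^ k ∣ a → p ^ k ∣ b ^ 2 := by
  obtain ⟨α, β, hkα, hkβ, hαβ⟩ := hgen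
  have hβp : β.hom p ≠ 0 :=
    (map_ne_zero_iff _ ((RingHom.injective_iff_ker_eq_bot _).mpr hkβ)).mpr hp.ne_zero
  exact pow_dvd_sq_of_forall_pow_succ_dvd
    (fun t => pow_succ_dvd_of_generization hkα hβp hαβ (hpsd β))

/-- Let `A` be a formally real UFD, `p` an irreducible with `(p)` a real prime ideal
such that some ordering `α` with support `(p)` admits a generization `β` with support
`(0)`.  If `a - b²` is nonnegative at every point of the real spectrum of `A`, then
`ν_p(a) ≤ 2·ν_p(b)`, i.e. every power of `p` dividing `a` divides `b²`. -/
theorem valuation_of_psd {A : Type*} [CommRing A] [IsDomain A]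
    [UniqueFactorizationMonoid A]
    (hA : ¬ IsSumSq (-1 : A))
    (a b p : A) (ha : a ≠ 0) (hb : b ≠ 0)
    (hp : Irreducible p) (hprime : (Ideal.span {p}).IsPrime)
    (hpreal : ¬ IsSumSq (-1 : A ⧸ Ideal.span {p}))
    (hgen : ∃ (α β : RealSpectrumPoint A),
        RingHom.ker α.hom = Ideal.span {p} ∧ RingHom.ker β.hom = ⊥ ∧
        ∀ x : A, 0 ≤ β.hom x → 0 ≤ α.hom x)
    (hpsd : ∀ γ : RealSpectrumPoint A, 0 ≤ γ.hom (a - b ^ 2)) :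
    ∀ k : ℕ, p ^ k ∣ a → p ^ k ∣ b ^ 2 :=
  valuation_of_psd_general a b p hp hgen hpsd
end
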